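/- arXiv:2406.02543 — 2 statements merged into one kernel-verified Lean document; each statement's English description precedes it below -/
import Mathlib

section
/- Let α > 1 and let μ be the Zipf distribution on the positive integers with exponent α, i.e., μ(i) = i^{−α}/ζ(α) where ζ(α) = Σ_{j=1}^∞ j^{−α}. Let X₁,…,X_k be i.i.d. samples from μ and let U_k = Σ_{i=1}^∞ μ(i) 𝟙{i ∉ {X₁,…,X_k}} be the missing mass. Then for every β > 0 there exists a constant C > 0 (depending only on α and β) such that for all k ≥ 1, E[U_k] ≤ C · k^{−((α−1)/α − β)}. -/
open MeasureTheory Filter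
open scoped Classical ENNReal

/-- The i.i.d. sample measure: the law of `k` independent draws from `μ`. -/
noncomputable def sampleMeasure {A : Type*} [MeasurableSpace A] (μ : PMF A) (k : ℕ) :
    Measure (Fin k → A) :=
  Measure.pi fun _ => μ.toMeasure

/-- The missing mass `U_k = ∑_x μ(x) 𝟙{x ∉ {X₁,…,X_k}}` of a sample `ω = (X₁,…,X_k)`. -/
noncomputable def missingMass {A : Type*} {k : ℕ} (μ : PMF A) (ω : Fin k → A) : ℝ :=
  ∑' x : A, (μ x).toReal * (if ∀ i, ω i ≠ x then 1 else 0)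

/-- The expected missing mass `E[U_k]` of `k` i.i.d. draws from `μ`. -/
noncomputable def expectedMissingMass {A : Type*} [MeasurableSpace A] (μ : PMF A) (k : ℕ) : ℝ :=
  ∫ ω, missingMass μ ω ∂(sampleMeasure μ k)

/-!
The expected missing mass is `∑ₓ μ(x) (1 - μ(x))^k`. For `0 ≤ γ ≤ 1` and `0 < p ≤ 1`,
`(1 - p)^k ≤ (k p)^(-γ)`: trivially if `k p ≤ 1`, and via `(1 - p)^k ≤ e^(-k p) ≤ (k p)⁻¹`
otherwise. Hence `E[U_k] ≤ (∑ₓ μ(x)^(1-γ)) k^(-γ)`. For the Zipf law `μ(i)^(1-γ)` is a constant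
times `i^(-α(1-γ))`, summable as soon as `γ < (α - 1)/α`; take `γ = max ((α - 1)/α - β) 0`.
-/

lemma missingMass_eq_tsum_indicator {A : Type*} {k : ℕ} (μ : PMF A) (ω : Fin k → A) :
    missingMass μ ω =
      ∑' x, (Set.univ.pi fun _ => {x}ᶜ).indicator (fun _ => (μ x).toReal) ω := by
  refine tsum_congr fun x => ?_
  by_cases h : ∀ i, ω i ≠ x <;> simp [Set.indicator, Set.mem_pi, h]

section MissingMass

variable {A : Type*} [MeasurableSpace A] [MeasurableSingletonClass A]

lemma sampleMeasure_pi_compl_singleton (μ : PMF A) (k : ℕ) (x : A) :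
    sampleMeasure μ k (Set.univ.pi fun _ => {x}ᶜ) = (1 - μ x) ^ k := by
  have hcompl : μ.toMeasure {x}ᶜ = 1 - μ x := by
    rw [measure_compl (measurableSet_singleton x) (measure_ne_top _ _), measure_univ,
      PMF.toMeasure_apply_singleton _ _ (measurableSet_singleton x)]
  simp [sampleMeasure, Measure.pi_pi, hcompl]

theorem expectedMissingMass_eq_tsum [Countable A] (μ : PMF A) (k : ℕ) :
    expectedMissingMass μ k = ∑' x, (μ x).toReal * (1 - (μ x).toReal) ^ k := by
  have hmeas (x : A) : MeasurableSet (Set.univ.pi fun _ : Fin k => ({x}ᶜ : Set A)) :=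
    .univ_pi fun _ => (measurableSet_singleton x).compl
  have hprob : IsProbabilityMeasure (sampleMeasure μ k) := by
    unfold sampleMeasure; infer_instance
  have hfinite : ∑' x, ∫⁻ ω, ‖(Set.univ.pi fun _ => {x}ᶜ).indicator
      (fun _ => (μ x).toReal) ω‖ₑ ∂sampleMeasure μ k ≠ ∞ := by
    refine ne_top_of_le_ne_top (b := ∑' x, μ x) (by simp) (ENNReal.tsum_le_tsum fun x => ?_)
    simp only [enorm_indicator_eq_indicator_enorm, lintegral_indicator_const (hmeas x)]
    calc ‖(μ x).toReal‖ₑ * _ ≤ ‖(μ x).toReal‖ₑ * 1 := by gcongr; exact prob_le_one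
      _ = μ x := by simp [Real.enorm_eq_ofReal, PMF.apply_ne_top]
  simp only [expectedMissingMass, missingMass_eq_tsum_indicator]
  rw [integral_tsum (fun x => (aestronglyMeasurable_const.indicator (hmeas x))) hfinite]
  refine tsum_congr fun x => ?_
  rw [integral_indicator_const _ (hmeas x), measureReal_def, sampleMeasure_pi_compl_singleton,
    ENNReal.toReal_pow, ENNReal.toReal_sub_of_le (PMF.coe_le_one μ x) ENNReal.one_ne_top,
    smul_eq_mul, mul_comm, ENNReal.toReal_one]

end MissingMass

lemma Real.exp_neg_le_inv {t : ℝ} (ht : 0 < t) : Real.exp (-t) ≤ t⁻¹ := by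
  rw [Real.exp_neg]
  exact inv_anti₀ ht (by linarith [Real.add_one_le_exp t])

lemma one_sub_pow_le_exp_neg_mul {p : ℝ} (hp : p ≤ 1) (k : ℕ) :
    (1 - p) ^ k ≤ Real.exp (-(k * p)) := by
  calc (1 - p) ^ k ≤ Real.exp (-p) ^ k :=
        pow_le_pow_left₀ (by linarith) (Real.one_sub_le_exp_neg p) k
    _ = Real.exp (-(k * p)) := by rw [← Real.exp_nat_mul]; ring_nf

lemma one_sub_pow_le_mul_rpow_neg {p γ : ℝ} (hp : 0 < p) (hp1 : p ≤ 1) {k : ℕ} (hk : 0 < k)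
    (hγ : 0 ≤ γ) (hγ1 : γ ≤ 1) : (1 - p) ^ k ≤ (k * p) ^ (-γ) := by
  have hkp : 0 < (k : ℝ) * p := by positivity
  rcases le_or_gt ((k : ℝ) * p) 1 with hsmall | hlarge
  · calc (1 - p) ^ k ≤ 1 := pow_le_one₀ (by linarith) (by linarith)
      _ ≤ (k * p) ^ (-γ) := Real.one_le_rpow_of_pos_of_le_one_of_nonpos hkp hsmall (by linarith)
  · calc (1 - p) ^ k ≤ Real.exp (-(k * p)) := one_sub_pow_le_exp_neg_mul hp1 k
      _ ≤ (k * p)⁻¹ := Real.exp_neg_le_inv hkp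
      _ = (k * p) ^ (-1 : ℝ) := (Real.rpow_neg_one _).symm
      _ ≤ (k * p) ^ (-γ) := Real.rpow_le_rpow_of_exponent_le hlarge.le (by linarith)

lemma mul_one_sub_pow_le_rpow_mul {p γ : ℝ} (hp : 0 ≤ p) (hp1 : p ≤ 1) {k : ℕ} (hk : 0 < k)
    (hγ : 0 ≤ γ) (hγ1 : γ ≤ 1) : p * (1 - p) ^ k ≤ p ^ (1 - γ) * (k : ℝ) ^ (-γ) := by
  rcases hp.eq_or_lt with rfl | hp
  · rw [zero_mul]; positivity
  calc p * (1 - p) ^ k ≤ p * (k * p) ^ (-γ) := by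
        gcongr; exact one_sub_pow_le_mul_rpow_neg hp hp1 hk hγ hγ1
    _ = p ^ (1 - γ) * (k : ℝ) ^ (-γ) := by
        rw [Real.mul_rpow (by positivity) hp.le, sub_eq_add_neg, Real.rpow_add hp, Real.rpow_one]
        ring

theorem expectedMissingMass_le_tsum_rpow_mul {A : Type*} [MeasurableSpace A]
    [MeasurableSingletonClass A] [Countable A] (μ : PMF A) {γ : ℝ} (hγ : 0 ≤ γ) (hγ1 : γ ≤ 1)
    (hsum : Summable fun x => (μ x).toReal ^ (1 - γ)) {k : ℕ} (hk : 0 < k) :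
    expectedMissingMass μ k ≤ (∑' x, (μ x).toReal ^ (1 - γ)) * (k : ℝ) ^ (-γ) := by
  have hle_one (x : A) : (μ x).toReal ≤ 1 :=
    ENNReal.toReal_le_of_le_ofReal zero_le_one (by simpa using μ.coe_le_one x)
  have hbound (x : A) := mul_one_sub_pow_le_rpow_mul ENNReal.toReal_nonneg (hle_one x) hk hγ hγ1
  rw [expectedMissingMass_eq_tsum, ← tsum_mul_right]
  refine Summable.tsum_le_tsum hbound (.of_nonneg_of_le (fun x => ?_) hbound ?_) (hsum.mul_right _)
  · exact mul_nonneg ENNReal.toReal_nonneg (pow_nonneg (by linarith [hle_one x]) k)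
  · exact hsum.mul_right _

lemma summable_zipf_rpow {α s : ℝ} (μ : PMF ℕ)
    (hμ : ∀ i : ℕ, 0 < i →
      (μ i).toReal = (i : ℝ) ^ (-α) / ∑' j : ℕ, ((j : ℝ) + 1) ^ (-α))
    (hαs : 1 < α * s) : Summable fun i => (μ i).toReal ^ s := by
  set Z := ∑' j : ℕ, ((j : ℝ) + 1) ^ (-α)
  have hZ : 0 ≤ Z := tsum_nonneg fun j => by positivity
  have hpow : Summable fun i : ℕ => ((i + 1 : ℕ) : ℝ) ^ (-(α * s)) / Z ^ s :=
    ((summable_nat_add_iff 1).2 (Real.summable_nat_rpow.2 (by linarith))).div_const _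
  refine (summable_nat_add_iff 1).1 (hpow.congr fun i => ?_)
  rw [hμ (i + 1) i.succ_pos, Real.div_rpow (by positivity) hZ, ← Real.rpow_mul (by positivity),
    neg_mul]

theorem zipf_expected_missingMass_le_general {α : ℝ} (hα : 1 < α) (μ : PMF ℕ)
    (hμ : ∀ i : ℕ, 0 < i →
      (μ i).toReal = (i : ℝ) ^ (-α) / ∑' j : ℕ, ((j : ℝ) + 1) ^ (-α))
    {β : ℝ} (hβ : 0 < β) :
    ∃ C : ℝ, 0 < C ∧ ∀ k : ℕ, 1 ≤ k →
      expectedMissingMass μ k ≤ C * (k : ℝ) ^ (-((α - 1) / α - β)) := by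
  set γ := max ((α - 1) / α - β) 0
  have hγ : 0 ≤ γ := le_max_right _ _
  have hαγ : 1 < α * (1 - γ) := by
    have : γ < (α - 1) / α := max_lt (by linarith) (div_pos (by linarith) (by linarith))
    rw [lt_div_iff₀ (by linarith)] at this
    linarith
  have hγ1 : γ ≤ 1 := by nlinarith
  set S := ∑' i, (μ i).toReal ^ (1 - γ)
  have hS : 0 ≤ S := tsum_nonneg fun i => by positivity
  refine ⟨S + 1, by linarith, fun k hk => ?_⟩
  calc expectedMissingMass μ k ≤ S * (k : ℝ) ^ (-γ) :=
        expectedMissingMass_le_tsum_rpow_mul μ hγ hγ1 (summable_zipf_rpow μ hμ hαγ) hk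
    _ ≤ (S + 1) * (k : ℝ) ^ (-((α - 1) / α - β)) := by
        gcongr
        · linarith
        · exact_mod_cast hk
        · exact le_max_left _ _

/-- missing mass of a Zipf distribution.  Let `μ` be the Zipf distribution
on the positive integers with exponent `α > 1`, i.e. `μ(i) = i^(-α) / ζ(α)` for `i ≥ 1`
(and `μ(0) = 0`), where `ζ(α) = ∑_{j ≥ 1} j^(-α)`.  Then for every `β > 0` there is a
constant `C > 0` (depending only on `α` and `β`) such that the expected missing mass of
`k` i.i.d. samples satisfies `E[U_k] ≤ C · k^(-((α-1)/α - β))` for all `k ≥ 1`. -/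
theorem zipf_expected_missingMass_le {α : ℝ} (hα : 1 < α) (μ : PMF ℕ)
    (hμ0 : μ 0 = 0)
    (hμ : ∀ i : ℕ, 0 < i →
      (μ i).toReal = (i : ℝ) ^ (-α) / ∑' j : ℕ, ((j : ℝ) + 1) ^ (-α))
    {β : ℝ} (hβ : 0 < β) :
    ∃ C : ℝ, 0 < C ∧ ∀ k : ℕ, 1 ≤ k →
      expectedMissingMass μ k ≤ C * (k : ℝ) ^ (-((α - 1) / α - β)) :=
  zipf_expected_missingMass_le_general hα μ hμ hβ
end

section
/- Let μ be a probability distribution on a countable set X, let k be a positive natural number, and let X₁,…,X_k be i.i.d. samples from μ. Let M be the number of elements of X that appear exactly once among X₁,…,X_k, let U_k^{GT} = M/k be the Good–Turing estimator, let U_k = Σ_{x∈X} μ(x) 𝟙{x ∉ {X₁,…,X_k}} be the missing mass, and let U_k^{(1)} = Σ_{x∈X} μ(x) 𝟙{x appears exactly once among X₁,…,X_k}. Then E[U_k^{GT}] − E[U_k] = E[U_k^{(1)}]/k. -/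
open MeasureTheory
open scoped Classical ENNReal

/-- `M`, the number of elements appearing exactly once in the sample `ω = (X₁,…,X_k)`:
an element appearing exactly once corresponds to exactly one sample index `i` whose value
is not attained by any other index. -/
noncomputable def onceCount {A : Type*} {k : ℕ} (ω : Fin k → A) : ℕ :=
  (Finset.univ.filter fun i : Fin k => ∀ j : Fin k, j ≠ i → ω j ≠ ω i).card

/-- `U_k⁽¹⁾ = ∑_x μ(x) 𝟙{x appears exactly once among X₁,…,X_k}`, the cumulative
probability of the elements appearing exactly once in the sample. -/
noncomputable def onceMass {A : Type*} {k : ℕ} (μ : PMF A) (ω : Fin k → A) : ℝ :=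
  ∑' x : A, (μ x).toReal * (if ∃! i : Fin k, ω i = x then 1 else 0)

/-! By linearity of expectation everything reduces to single-letter probabilities. Writing
`p = μ x`, the letter `x` is missed with probability `(1 - p)^k` and seen exactly once with
probability `k p (1 - p)^(k-1)`, while a fixed sample index carries a value seen at no other
index with probability `∑ₓ p (1 - p)^(k-1)`. So `E[M]/k = ∑ₓ p (1 - p)^(k-1)`, and splitting
`(1 - p)^(k-1) = (1 - p)^k + p (1 - p)^(k-1)` turns this into `E[U_k] + E[U_k⁽¹⁾]/k`. -/

namespace PMF

variable {A : Type*} (μ : PMF A)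

lemma summable_toReal : Summable fun x => (μ x).toReal :=
  ENNReal.summable_toReal μ.tsum_coe_ne_top

lemma toMeasure_real_singleton [MeasurableSpace A] [MeasurableSingletonClass A] (x : A) :
    μ.toMeasure.real {x} = (μ x).toReal := by
  rw [measureReal_def, μ.toMeasure_apply_singleton x (measurableSet_singleton x)]

lemma toReal_le_one (x : A) : (μ x).toReal ≤ 1 :=
  ENNReal.toReal_le_of_le_ofReal zero_le_one (by simpa using μ.coe_le_one x)

lemma summable_toReal_mul {f : A → ℝ} (hf₀ : ∀ x, 0 ≤ f x) (hf₁ : ∀ x, f x ≤ 1) :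
    Summable fun x => (μ x).toReal * f x :=
  μ.summable_toReal.of_nonneg_of_le (fun x => mul_nonneg ENNReal.toReal_nonneg (hf₀ x))
    (fun x => mul_le_of_le_one_right ENNReal.toReal_nonneg (hf₁ x))

end PMF

namespace GoodTuring

open Function

section ProductMeasure

variable {ι A : Type*}

def onlyAt (x : A) (i : ι) : Set (ι → A) :=
  {ω | ω i = x ∧ ∀ j, j ≠ i → ω j ≠ x}

lemma onlyAt_eq_pi (x : A) (i : ι) :
    onlyAt x i = Set.pi Set.univ fun j => if j = i then {x} else {x}ᶜ := by
  ext ω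
  simp only [onlyAt, Set.mem_ofPred_eq, Set.mem_pi, Set.mem_univ, forall_const]
  refine ⟨fun ⟨hi, hj⟩ j => ?_,
    fun h => ⟨by simpa using h i, fun j hj => by simpa [hj] using h j⟩⟩
  by_cases hji : j = i
  · subst hji; simpa using hi
  · simpa [hji] using hj j hji

lemma measurableSet_onlyAt [Countable ι] [MeasurableSpace A] [MeasurableSingletonClass A]
    (x : A) (i : ι) : MeasurableSet (onlyAt x i) := by
  rw [onlyAt_eq_pi]
  refine MeasurableSet.univ_pi fun j => ?_
  split_ifs
  · exact measurableSet_singleton x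
  · exact (measurableSet_singleton x).compl

lemma pairwise_disjoint_onlyAt_index (x : A) :
    Pairwise (Disjoint on (onlyAt x : ι → Set (ι → A))) :=
  fun i _ hij => Set.disjoint_left.mpr fun _ hi hj => hj.2 i hij hi.1

lemma pairwise_disjoint_onlyAt_value (i : ι) :
    Pairwise (Disjoint on (onlyAt · i : A → Set (ι → A))) :=
  fun _ _ hxy => Set.disjoint_left.mpr fun _ hx hy => hxy (hx.1.symm.trans hy.1)

lemma setOf_existsUnique_eq_iUnion_onlyAt (x : A) :
    {ω : ι → A | ∃! i, ω i = x} = ⋃ i, onlyAt x i := by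
  ext ω
  simp only [Set.mem_ofPred_eq, Set.mem_iUnion, onlyAt, ExistsUnique]
  exact ⟨fun ⟨i, hi, hu⟩ => ⟨i, hi, fun j hj hx => hj (hu j hx)⟩,
    fun ⟨i, hi, hu⟩ => ⟨i, hi, fun j hx => by_contra fun hj => hu j hj hx⟩⟩

lemma setOf_forall_ne_self_eq_iUnion_onlyAt (i : ι) :
    {ω : ι → A | ∀ j, j ≠ i → ω j ≠ ω i} = ⋃ x, onlyAt x i := by
  ext ω
  simp only [Set.mem_ofPred_eq, Set.mem_iUnion, onlyAt]
  exact ⟨fun h => ⟨ω i, rfl, h⟩, fun ⟨_, hx, h⟩ => hx ▸ h⟩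

lemma setOf_forall_ne_eq_pi (x : A) :
    {ω : ι → A | ∀ i, ω i ≠ x} = Set.pi Set.univ fun _ => {x}ᶜ := by
  ext ω; simp

lemma measurableSet_setOf_forall_ne [Countable ι] [MeasurableSpace A] [MeasurableSingletonClass A]
    (x : A) : MeasurableSet {ω : ι → A | ∀ i, ω i ≠ x} := by
  rw [setOf_forall_ne_eq_pi]
  exact MeasurableSet.univ_pi fun _ => (measurableSet_singleton x).compl

variable [Fintype ι] [MeasurableSpace A] [MeasurableSingletonClass A]
  (m : Measure A) [IsProbabilityMeasure m]

lemma measureReal_pi_onlyAt (x : A) (i : ι) :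
    (Measure.pi fun _ : ι => m).real (onlyAt x i) =
      m.real {x} * (1 - m.real {x}) ^ (Fintype.card ι - 1) := by
  rw [onlyAt_eq_pi, measureReal_def, Measure.pi_pi, ENNReal.toReal_prod,
    ← Finset.mul_prod_erase _ _ (Finset.mem_univ i), if_pos rfl,
    Finset.prod_congr rfl fun j hj => by rw [if_neg (Finset.ne_of_mem_erase hj)],
    Finset.prod_const, Finset.card_erase_of_mem (Finset.mem_univ i), Finset.card_univ]
  simp only [← measureReal_def, probReal_compl_eq_one_sub (measurableSet_singleton x)]

lemma measureReal_pi_forall_ne (x : A) :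
    (Measure.pi fun _ : ι => m).real {ω | ∀ i, ω i ≠ x} =
      (1 - m.real {x}) ^ Fintype.card ι := by
  rw [setOf_forall_ne_eq_pi, measureReal_def, Measure.pi_pi, ENNReal.toReal_prod]
  simp only [← measureReal_def, probReal_compl_eq_one_sub (measurableSet_singleton x),
    Finset.prod_const, Finset.card_univ]

lemma measurableSet_setOf_existsUnique (x : A) :
    MeasurableSet {ω : ι → A | ∃! i, ω i = x} := by
  rw [setOf_existsUnique_eq_iUnion_onlyAt]
  exact MeasurableSet.iUnion (measurableSet_onlyAt x)

lemma measurableSet_setOf_forall_ne_self [Countable A] (i : ι) :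
    MeasurableSet {ω : ι → A | ∀ j, j ≠ i → ω j ≠ ω i} := by
  rw [setOf_forall_ne_self_eq_iUnion_onlyAt]
  exact MeasurableSet.iUnion (measurableSet_onlyAt · i)

lemma measureReal_pi_existsUnique (x : A) :
    (Measure.pi fun _ : ι => m).real {ω | ∃! i, ω i = x} =
      Fintype.card ι * (m.real {x} * (1 - m.real {x}) ^ (Fintype.card ι - 1)) := by
  rw [setOf_existsUnique_eq_iUnion_onlyAt,
    measureReal_iUnion_fintype (pairwise_disjoint_onlyAt_index x) (measurableSet_onlyAt x)]
  simp [measureReal_pi_onlyAt]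

lemma measureReal_pi_forall_ne_self [Countable A] (i : ι) :
    (Measure.pi fun _ : ι => m).real {ω | ∀ j, j ≠ i → ω j ≠ ω i} =
      ∑' x, m.real {x} * (1 - m.real {x}) ^ (Fintype.card ι - 1) := by
  rw [setOf_forall_ne_self_eq_iUnion_onlyAt, measureReal_def,
    measure_iUnion (pairwise_disjoint_onlyAt_value i) (measurableSet_onlyAt · i),
    ENNReal.tsum_toReal_eq fun _ => measure_ne_top _ _]
  exact tsum_congr fun x => measureReal_pi_onlyAt m x i

end ProductMeasure

lemma integral_tsum_mul_indicator {Ω A : Type*} [MeasurableSpace Ω] [Countable A]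
    (ν : Measure Ω) [IsFiniteMeasure ν] {w : A → ℝ} (hw : Summable w) {S : A → Set Ω}
    (hS : ∀ x, MeasurableSet (S x)) :
    ∫ ω, ∑' x, w x * (S x).indicator 1 ω ∂ν = ∑' x, w x * ν.real (S x) := by
  have hint x : Integrable (fun ω => w x * (S x).indicator 1 ω) ν :=
    ((integrable_const 1).indicator (hS x)).const_mul _
  have hnorm x : ∫ ω, ‖w x * (S x).indicator 1 ω‖ ∂ν = |w x| * ν.real (S x) := by
    have : ∀ ω, ‖w x * (S x).indicator 1 ω‖ = |w x| * (S x).indicator 1 ω := fun ω => by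
      rw [norm_mul, Real.norm_eq_abs, norm_indicator_eq_indicator_norm]; simp [Pi.one_def]
    simp_rw [this]
    rw [integral_const_mul, integral_indicator_one (hS x)]
  have hsum : Summable fun x => ∫ ω, ‖w x * (S x).indicator 1 ω‖ ∂ν := by
    simp_rw [hnorm]
    exact Summable.of_nonneg_of_le (fun x => by positivity)
      (fun x => mul_le_mul_of_nonneg_left (measureReal_mono (Set.subset_univ _)) (abs_nonneg _))
      (hw.abs.mul_right (ν.real Set.univ))
  rw [← integral_tsum_of_summable_integral_norm hint hsum]
  exact tsum_congr fun x => by rw [integral_const_mul, integral_indicator_one (hS x)]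

lemma tsum_mul_one_sub_pow_pred_eq {A : Type*} (μ : PMF A) {k : ℕ} (hk : 0 < k) :
    ∑' x, (μ x).toReal * (1 - (μ x).toReal) ^ (k - 1) =
      ∑' x, (μ x).toReal * (1 - (μ x).toReal) ^ k +
        ∑' x, (μ x).toReal * ((μ x).toReal * (1 - (μ x).toReal) ^ (k - 1)) := by
  have h₀ x : 0 ≤ 1 - (μ x).toReal := sub_nonneg.mpr (μ.toReal_le_one x)
  have h₁ x : 1 - (μ x).toReal ≤ 1 := sub_le_self _ ENNReal.toReal_nonneg
  have hpow₀ n x : 0 ≤ (1 - (μ x).toReal) ^ n := pow_nonneg (h₀ x) n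
  have hpow₁ n x : (1 - (μ x).toReal) ^ n ≤ 1 := pow_le_one₀ (h₀ x) (h₁ x)
  rw [← Summable.tsum_add (μ.summable_toReal_mul (hpow₀ k) (hpow₁ k))
    (μ.summable_toReal_mul (fun x => mul_nonneg ENNReal.toReal_nonneg (hpow₀ _ x))
      (fun x => mul_le_one₀ (μ.toReal_le_one x) (hpow₀ _ x) (hpow₁ _ x)))]
  obtain ⟨n, rfl⟩ := Nat.exists_eq_succ_of_ne_zero hk.ne'
  exact tsum_congr fun x => by simp only [Nat.succ_sub_one, pow_succ]; ring

section Sample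

variable {A : Type*} [MeasurableSpace A] [MeasurableSingletonClass A] (μ : PMF A) {k : ℕ}

instance : IsProbabilityMeasure (sampleMeasure μ k) := by
  unfold sampleMeasure; infer_instance

lemma integral_missingMass [Countable A] :
    ∫ ω, missingMass μ ω ∂(sampleMeasure μ k) =
      ∑' x, (μ x).toReal * (1 - (μ x).toReal) ^ k := by
  have h ω : missingMass μ ω =
      ∑' x, (μ x).toReal * {ω : Fin k → A | ∀ i, ω i ≠ x}.indicator 1 ω :=
    tsum_congr fun x => by simp [Set.indicator_apply]
  simp_rw [h]
  rw [integral_tsum_mul_indicator _ μ.summable_toReal measurableSet_setOf_forall_ne]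
  simp [sampleMeasure, measureReal_pi_forall_ne, PMF.toMeasure_real_singleton]

lemma integral_onceMass [Countable A] :
    ∫ ω, onceMass μ ω ∂(sampleMeasure μ k) =
      k * ∑' x, (μ x).toReal * ((μ x).toReal * (1 - (μ x).toReal) ^ (k - 1)) := by
  have h ω : onceMass μ ω =
      ∑' x, (μ x).toReal * {ω : Fin k → A | ∃! i, ω i = x}.indicator 1 ω :=
    tsum_congr fun x => by simp [Set.indicator_apply]
  simp_rw [h]
  rw [integral_tsum_mul_indicator _ μ.summable_toReal measurableSet_setOf_existsUnique,
    ← tsum_mul_left]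
  refine tsum_congr fun x => ?_
  simp only [sampleMeasure, measureReal_pi_existsUnique, PMF.toMeasure_real_singleton,
    Fintype.card_fin]
  ring

lemma integral_onceCount [Countable A] :
    ∫ ω, (onceCount ω : ℝ) ∂(sampleMeasure μ k) =
      k * ∑' x, (μ x).toReal * (1 - (μ x).toReal) ^ (k - 1) := by
  have h ω : (onceCount ω : ℝ) =
      ∑ i, {ω : Fin k → A | ∀ j, j ≠ i → ω j ≠ ω i}.indicator 1 ω := by
    rw [onceCount, Finset.card_filter]
    push_cast
    simp only [Set.indicator_apply, Set.mem_ofPred_eq, Pi.one_apply]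
  simp_rw [h]
  rw [integral_finsetSum _ fun i _ =>
    (integrable_const 1).indicator (measurableSet_setOf_forall_ne_self i)]
  simp [integral_indicator_one (measurableSet_setOf_forall_ne_self _), sampleMeasure,
    measureReal_pi_forall_ne_self, PMF.toMeasure_real_singleton]

end Sample

end GoodTuring

open GoodTuring in
/-- bias of the Good–Turing estimator.  For `k` i.i.d. samples from a
distribution `μ` on a countable set, with `U_k^GT = M/k` the Good–Turing estimator,
`U_k` the missing mass and `U_k⁽¹⁾` the mass of elements seen exactly once:
`E[U_k^GT] - E[U_k] = E[U_k⁽¹⁾]/k`. -/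
theorem goodTuring_bias {A : Type*} [Countable A]
    [MeasurableSpace A] [MeasurableSingletonClass A] {k : ℕ} (hk : 0 < k) (μ : PMF A) :
    (∫ ω, (onceCount ω : ℝ) / k ∂(sampleMeasure μ k)) -
        (∫ ω, missingMass μ ω ∂(sampleMeasure μ k)) =
      (∫ ω, onceMass μ ω ∂(sampleMeasure μ k)) / k := by
  have hk₀ : (k : ℝ) ≠ 0 := Nat.cast_ne_zero.mpr hk.ne'
  rw [integral_div, integral_onceCount, integral_missingMass, integral_onceMass,
    tsum_mul_one_sub_pow_pred_eq μ hk]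
  field_simp
  ring
end
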